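/- Let V ⊂ R^l be a finite data set with a clustering consistent with metric d, and let φ: (V, D) → (V', d') be an isometric embedding of the transitive-distance ultrametric space into Euclidean space. Then the convex hulls of the images of distinct clusters are pairwise disjoint. -/

import Mathlib

open scoped Classical

/-- The cost of a path (list of vertices): the maximum distance between
consecutive vertices (0 for trivial paths). -/
noncomputable def pathCost {V : Type*} [MetricSpace V] : List V → ℝ
  | [] => 0
  | [_] => 0
  | a :: b :: t => max (dist a b) (pathCost (b :: t))

/-- `l` is a path from `x` to `y`: a nonempty list starting at `x` and ending at `y`. -/
def IsPathList {V : Type*} (x y : V) (l : List V) : Prop :=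
  l.head? = some x ∧ l.getLast? = some y

/-- The transitive distance: the minimum (infimum) over all paths from `x` to `y`
of the maximum edge length along the path. -/
noncomputable def transDist {V : Type*} [MetricSpace V] (x y : V) : ℝ :=
  sInf {c | ∃ l : List V, IsPathList x y l ∧ pathCost l = c}

/-- The distance between two finite sets: the minimum pairwise distance. -/
noncomputable def finsetDist {V : Type*} [MetricSpace V] (A B : Finset V) : ℝ :=
  sInf {r | ∃ a ∈ A, ∃ b ∈ B, dist a b = r}

/-- `clusters` is a partition of `V` into clusters. -/
def IsClustering {V : Type*} (clusters : Finset (Finset V)) : Prop :=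
  ∀ x : V, ∃! C, C ∈ clusters ∧ x ∈ C

/-- A clustering is consistent with the metric if for every cluster `C`, every
point `y` outside `C`, and every partition of `C` into two nonempty parts `C₁`
and `C₂`, the distance between `C₁` and `C₂` is strictly smaller than the
distance from `y` to `C`. -/
def Consistent {V : Type*} [MetricSpace V] (clusters : Finset (Finset V)) : Prop :=
  ∀ C ∈ clusters, ∀ y : V, y ∉ C → ∀ C1 C2 : Finset V,
    C1.Nonempty → C2.Nonempty → Disjoint C1 C2 → C1 ∪ C2 = C →
    finsetDist C1 C2 < finsetDist {y} C

section Aux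
variable {V : Type*} [MetricSpace V]

lemma pathCost_nonneg : ∀ l : List V, 0 ≤ pathCost l
  | [] => le_refl 0
  | [_] => le_refl 0
  | _ :: b :: t => le_trans dist_nonneg (le_max_left _ _)

lemma isPathList_pair (x y : V) : IsPathList x y [x, y] := by
  constructor <;> simp [IsPathList]

lemma costSet_nonempty (x y : V) :
    {c | ∃ l : List V, IsPathList x y l ∧ pathCost l = c}.Nonempty :=
  ⟨pathCost [x, y], [x, y], isPathList_pair x y, rfl⟩

lemma costSet_bddBelow (x y : V) :
    BddBelow {c | ∃ l : List V, IsPathList x y l ∧ pathCost l = c} :=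
  ⟨0, fun c ⟨l, _, hc⟩ => hc ▸ pathCost_nonneg l⟩

lemma transDist_le_pathCost {x y : V} {l : List V} (h : IsPathList x y l) :
    transDist x y ≤ pathCost l :=
  csInf_le (costSet_bddBelow x y) ⟨l, h, rfl⟩

lemma le_transDist {x y : V} {B : ℝ}
    (h : ∀ l : List V, IsPathList x y l → B ≤ pathCost l) :
    B ≤ transDist x y :=
  le_csInf (costSet_nonempty x y) (fun c ⟨l, hl, hc⟩ => hc ▸ h l hl)

lemma transDist_nonneg (x y : V) : 0 ≤ transDist x y :=
  Real.sInf_nonneg (fun c ⟨l, _, hc⟩ => hc ▸ pathCost_nonneg l)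

lemma transDist_self (x : V) : transDist x x ≤ 0 := by
  have h : IsPathList x x [x] := by constructor <;> simp
  have := transDist_le_pathCost h
  simpa [pathCost] using this

lemma pathCost_append_le : ∀ (l : List V) (a b : V), l.getLast? = some a →
    pathCost (l ++ [b]) ≤ max (pathCost l) (dist a b)
  | [], a, b, h => by simp at h
  | [c], a, b, h => by
      simp at h
      subst h
      simp [pathCost, max_comm]
  | c :: d :: t, a, b, h => by
      have h' : (d :: t).getLast? = some a := by
        rwa [List.getLast?_cons_cons] at h
      have ih := pathCost_append_le (d :: t) a b h'
      show max (dist c d) (pathCost ((d :: t) ++ [b])) ≤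
        max (max (dist c d) (pathCost (d :: t))) (dist a b)
      rw [max_assoc]
      exact max_le_max le_rfl ih

lemma exists_crossing (P : V → Prop) : ∀ (l : List V) (x y : V),
    IsPathList x y l → P x → ¬ P y →
    ∃ a b, P a ∧ ¬ P b ∧ dist a b ≤ pathCost l
  | [], x, y, h, _, _ => by simp [IsPathList] at h
  | [c], x, y, h, hx, hy => by
      obtain ⟨h1, h2⟩ := h
      simp at h1 h2
      subst h1; subst h2
      exact absurd hx hy
  | c :: d :: t, x, y, h, hx, hy => by
      obtain ⟨h1, h2⟩ := h
      simp at h1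
      subst h1
      by_cases hd : P d
      · have hpath : IsPathList d y (d :: t) :=
          ⟨rfl, by rwa [List.getLast?_cons_cons] at h2⟩
        obtain ⟨a, b, ha, hb, hab⟩ := exists_crossing P (d :: t) d y hpath hd hy
        exact ⟨a, b, ha, hb, le_trans hab (le_max_right _ _)⟩
      · exact ⟨c, d, hx, hd, le_max_left _ _⟩

lemma finsetDist_bddBelow (A B : Finset V) :
    BddBelow {r | ∃ a ∈ A, ∃ b ∈ B, dist a b = r} :=
  ⟨0, fun r ⟨a, _, b, _, h⟩ => h ▸ dist_nonneg⟩

lemma finsetDist_nonneg (A B : Finset V) : 0 ≤ finsetDist A B :=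
  Real.sInf_nonneg (fun r ⟨a, _, b, _, h⟩ => h ▸ dist_nonneg)

lemma finsetDist_le {A B : Finset V} {a b : V} (ha : a ∈ A) (hb : b ∈ B) :
    finsetDist A B ≤ dist a b :=
  csInf_le (finsetDist_bddBelow A B) ⟨a, ha, b, hb, rfl⟩

lemma finsetDist_exists {A B : Finset V} (hA : A.Nonempty) (hB : B.Nonempty) :
    ∃ a ∈ A, ∃ b ∈ B, dist a b = finsetDist A B := by
  have hset : {r | ∃ a ∈ A, ∃ b ∈ B, dist a b = r}
      = ↑((A ×ˢ B).image fun p => dist p.1 p.2) := by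
    ext r
    simp [Finset.mem_image, Finset.mem_product]
  have hne : {r | ∃ a ∈ A, ∃ b ∈ B, dist a b = r}.Nonempty := by
    obtain ⟨a, ha⟩ := hA; obtain ⟨b, hb⟩ := hB
    exact ⟨dist a b, a, ha, b, hb, rfl⟩
  have hfin : {r | ∃ a ∈ A, ∃ b ∈ B, dist a b = r}.Finite := by
    rw [hset]; exact Finset.finite_toSet _
  have := hne.csInf_mem hfin
  obtain ⟨a, ha, b, hb, h⟩ := this
  exact ⟨a, ha, b, hb, h⟩

end Aux
section Key
variable {V : Type*} [Fintype V] [MetricSpace V]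

lemma key (clusters : Finset (Finset V)) (hcons : Consistent clusters)
    (C : Finset V) (hC : C ∈ clusters) (hcard : 2 ≤ C.card)
    (hne : (Finset.univ \ C).Nonempty) :
    ∃ B : ℝ, 0 < B ∧ (∀ x ∈ C, ∀ x' ∈ C, transDist x x' < B) ∧
      (∀ x ∈ C, ∀ z, z ∉ C → B ≤ transDist x z) := by
  set B := (Finset.univ \ C).inf' hne (fun y => finsetDist {y} C) with hB
  have hBle : ∀ y, y ∉ C → B ≤ finsetDist {y} C := by
    intro y hy
    exact Finset.inf'_le _ (by simp [hy])
  -- B is one of the values, and every split distance is < every value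
  have hsplit : ∀ C1 C2 : Finset V, C1.Nonempty → C2.Nonempty → Disjoint C1 C2 →
      C1 ∪ C2 = C → finsetDist C1 C2 < B := by
    intro C1 C2 h1 h2 hd hu
    obtain ⟨y, hy, hyB⟩ := Finset.exists_mem_eq_inf' hne (fun y => finsetDist {y} C)
    have hyC : y ∉ C := by simpa using (Finset.mem_sdiff.mp hy).2
    have := hcons C hC y hyC C1 C2 h1 h2 hd hu
    rw [hB, hyB]
    exact this
  -- positivity
  have hBpos : 0 < B := by
    obtain ⟨a, ha⟩ := Finset.card_pos.mp (by omega : 0 < C.card)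
    obtain ⟨b, hb, hba⟩ := Finset.exists_mem_ne (lt_of_lt_of_le one_lt_two hcard) a
    have herase : (C.erase a).Nonempty := ⟨b, Finset.mem_erase.mpr ⟨hba, hb⟩⟩
    have hd : Disjoint ({a} : Finset V) (C.erase a) := by
      simp [Finset.disjoint_singleton_left]
    have hu : ({a} : Finset V) ∪ C.erase a = C := by
      rw [← Finset.insert_eq, Finset.insert_erase ha]
    have := hsplit {a} (C.erase a) ⟨a, Finset.mem_singleton_self a⟩ herase hd hu
    exact lt_of_le_of_lt (finsetDist_nonneg _ _) this
  refine ⟨B, hBpos, ?_, ?_⟩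
  · -- intra-cluster: connectivity argument
    intro x hx x' hx'
    set S := C.filter (fun v => transDist x v < B) with hS
    have hxS : x ∈ S := by
      rw [hS, Finset.mem_filter]
      exact ⟨hx, lt_of_le_of_lt (transDist_self x) hBpos⟩
    have hSC : S ⊆ C := Finset.filter_subset _ _
    have hCS : C ⊆ S := by
      by_contra hcon
      have hT : (C \ S).Nonempty := by
        obtain ⟨v, hv, hvS⟩ := Finset.not_subset.mp hcon
        exact ⟨v, Finset.mem_sdiff.mpr ⟨hv, hvS⟩⟩
      have hd : Disjoint S (C \ S) := Finset.disjoint_sdiff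
      have hu : S ∪ (C \ S) = C := Finset.union_sdiff_of_subset hSC
      have hlt := hsplit S (C \ S) ⟨x, hxS⟩ hT hd hu
      obtain ⟨a, ha, b, hb, hab⟩ := finsetDist_exists ⟨x, hxS⟩ hT
      have haB : transDist x a < B := (Finset.mem_filter.mp ha).2
      have habB : dist a b < B := by rw [hab]; exact hlt
      -- get a path from x to a with cost < B
      obtain ⟨c, ⟨l, hl, hlc⟩, hcB⟩ :=
        exists_lt_of_csInf_lt (costSet_nonempty x a) haB
      have hlast : l.getLast? = some a := hl.2
      have hpath : IsPathList x b (l ++ [b]) := by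
        constructor
        · rcases l with _ | ⟨c, t⟩
          · simp [IsPathList] at hl
          · simpa using hl.1
        · simp [List.getLast?_append]
      have hcost : pathCost (l ++ [b]) < B := by
        have := pathCost_append_le l a b hlast
        rw [hlc] at this
        exact lt_of_le_of_lt this (max_lt hcB habB)
      have hbS : b ∈ S := by
        rw [hS, Finset.mem_filter]
        refine ⟨(Finset.mem_sdiff.mp hb).1, ?_⟩
        exact lt_of_le_of_lt (transDist_le_pathCost hpath) hcost
      exact (Finset.mem_sdiff.mp hb).2 hbS
    exact (Finset.mem_filter.mp (hCS hx')).2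
  · -- cross: every path leaving C has a long edge
    intro x hx z hz
    apply le_transDist
    intro l hl
    obtain ⟨a, b, ha, hb, hab⟩ := exists_crossing (fun v => v ∈ C) l x z hl hx hz
    have h1 : finsetDist {b} C ≤ dist b a := finsetDist_le (Finset.mem_singleton_self b) ha
    have h2 : B ≤ finsetDist {b} C := hBle b hb
    calc B ≤ dist b a := le_trans h2 h1
      _ = dist a b := dist_comm b a
      _ ≤ pathCost l := hab

end Key
section Euc
open scoped RealInnerProductSpace

lemma inner_expand {E : Type*} [NormedAddCommGroup E] [InnerProductSpace ℝ E]
    (u v u' v' : E) :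
    ⟪u - v, u' - v'⟫ = (‖u - v'‖^2 + ‖u' - v‖^2 - ‖u - u'‖^2 - ‖v - v'‖^2)/2 := by
  have h1 : ‖u - v'‖^2 = ‖u‖^2 - 2*⟪u,v'⟫ + ‖v'‖^2 := norm_sub_sq_real u v'
  have h2 : ‖u' - v‖^2 = ‖u'‖^2 - 2*⟪u',v⟫ + ‖v‖^2 := norm_sub_sq_real u' v
  have h3 : ‖u - u'‖^2 = ‖u‖^2 - 2*⟪u,u'⟫ + ‖u'‖^2 := norm_sub_sq_real u u'
  have h4 : ‖v - v'‖^2 = ‖v‖^2 - 2*⟪v,v'⟫ + ‖v'‖^2 := norm_sub_sq_real v v'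
  have h5 : ⟪u - v, u' - v'⟫ = ⟪u,u'⟫ - ⟪u,v'⟫ - (⟪v,u'⟫ - ⟪v,v'⟫) := by
    rw [inner_sub_left, inner_sub_right, inner_sub_right]
  have h6 : ⟪u',v⟫ = ⟪v,u'⟫ := real_inner_comm v u'
  linarith

end Euc

open scoped RealInnerProductSpace

/-- For a consistent clustering, after isometrically embedding the
transitive-distance ultrametric space into Euclidean space, the convex hulls of
the images of distinct clusters are pairwise disjoint. -/
theorem convexHulls_disjoint {V : Type*} [Fintype V] [MetricSpace V] {s : ℕ}
    (clusters : Finset (Finset V)) (hpart : IsClustering clusters)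
    (hsize : ∀ C ∈ clusters, 2 ≤ C.card)
    (hcons : Consistent clusters)
    (φ : V → EuclideanSpace ℝ (Fin s))
    (hiso : ∀ x y : V, ‖φ x - φ y‖ = transDist x y) :
    ∀ C1 ∈ clusters, ∀ C2 ∈ clusters, C1 ≠ C2 →
      Disjoint (convexHull ℝ (φ '' (C1 : Set V))) (convexHull ℝ (φ '' (C2 : Set V))) := by
  intro C1 hC1 C2 hC2 hne12
  -- clusters are pairwise disjoint
  have hdisj : ∀ v, v ∈ C1 → v ∉ C2 := by
    intro v h1 h2
    obtain ⟨C, _, huniq⟩ := hpart v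
    exact hne12 ((huniq C1 ⟨hC1, h1⟩).trans (huniq C2 ⟨hC2, h2⟩).symm)
  have hC1ne : C1.Nonempty := Finset.card_pos.mp (lt_of_lt_of_le two_pos (hsize C1 hC1))
  have hC2ne : C2.Nonempty := Finset.card_pos.mp (lt_of_lt_of_le two_pos (hsize C2 hC2))
  obtain ⟨z2, hz2⟩ := hC2ne
  obtain ⟨z1, hz1⟩ := hC1ne
  have hz2n : z2 ∉ C1 := fun h => hdisj z2 h hz2
  have hz1n : z1 ∉ C2 := hdisj z1 hz1
  have hne1 : (Finset.univ \ C1).Nonempty :=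
    ⟨z2, Finset.mem_sdiff.mpr ⟨Finset.mem_univ _, hz2n⟩⟩
  have hne2 : (Finset.univ \ C2).Nonempty :=
    ⟨z1, Finset.mem_sdiff.mpr ⟨Finset.mem_univ _, hz1n⟩⟩
  obtain ⟨B1, hB1pos, hintra1, hcross1⟩ := key clusters hcons C1 hC1 (hsize C1 hC1) hne1
  obtain ⟨B2, hB2pos, hintra2, hcross2⟩ := key clusters hcons C2 hC2 (hsize C2 hC2) hne2
  have hC1ne : C1.Nonempty := ⟨z1, hz1⟩
  have hC2ne : C2.Nonempty := ⟨z2, hz2⟩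
  -- max intra-cluster transitive distances
  have hpairs1 : (C1 ×ˢ C1).Nonempty := hC1ne.product hC1ne
  have hpairs2 : (C2 ×ˢ C2).Nonempty := hC2ne.product hC2ne
  set M1 := (C1 ×ˢ C1).sup' hpairs1 (fun p => transDist p.1 p.2) with hM1
  set M2 := (C2 ×ˢ C2).sup' hpairs2 (fun p => transDist p.1 p.2) with hM2
  have hM1lt : M1 < B1 := by
    rw [hM1, Finset.sup'_lt_iff]
    intro p hp
    obtain ⟨h1, h2⟩ := Finset.mem_product.mp hp
    exact hintra1 p.1 h1 p.2 h2
  have hM2lt : M2 < B2 := by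
    rw [hM2, Finset.sup'_lt_iff]
    intro p hp
    obtain ⟨h1, h2⟩ := Finset.mem_product.mp hp
    exact hintra2 p.1 h1 p.2 h2
  have hM1le : ∀ x ∈ C1, ∀ x' ∈ C1, transDist x x' ≤ M1 := fun x hx x' hx' =>
    Finset.le_sup' (f := fun p => transDist p.1 p.2) (b := (x, x'))
      (Finset.mem_product.mpr ⟨hx, hx'⟩)
  have hM2le : ∀ x ∈ C2, ∀ x' ∈ C2, transDist x x' ≤ M2 := fun x hx x' hx' =>
    Finset.le_sup' (f := fun p => transDist p.1 p.2) (b := (x, x'))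
      (Finset.mem_product.mpr ⟨hx, hx'⟩)
  have hM1nn : 0 ≤ M1 := le_trans (transDist_nonneg z1 z1) (hM1le z1 hz1 z1 hz1)
  have hM2nn : 0 ≤ M2 := le_trans (transDist_nonneg z2 z2) (hM2le z2 hz2 z2 hz2)
  set ε : ℝ := (B1^2 - M1^2 + B2^2 - M2^2)/2 with hε
  have hεpos : 0 < ε := by
    have h1 : M1^2 < B1^2 := by nlinarith
    have h2 : M2^2 < B2^2 := by nlinarith
    rw [hε]; linarith
  rw [Set.disjoint_left]
  intro p hp1 hp2
  rw [← Finset.coe_image, Finset.convexHull_eq] at hp1 hp2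
  obtain ⟨w, hw0, hw1, hwp⟩ := hp1
  obtain ⟨m, hm0, hm1, hmp⟩ := hp2
  set A := C1.image φ with hA
  set B := C2.image φ with hB
  set P := A ×ˢ B with hP
  set c : (EuclideanSpace ℝ (Fin s)) × (EuclideanSpace ℝ (Fin s)) → ℝ :=
    fun t => w t.1 * m t.2 with hc
  have hcnn : ∀ t ∈ P, 0 ≤ c t := by
    intro t ht
    obtain ⟨h1, h2⟩ := Finset.mem_product.mp ht
    exact mul_nonneg (hw0 t.1 h1) (hm0 t.2 h2)
  have hp' : ∑ t ∈ P, c t • t.1 = p := by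
    rw [hP, Finset.sum_product]
    have h : ∀ u ∈ A, ∑ v ∈ B, c (u, v) • u = w u • u := by
      intro u _
      simp only [hc]
      rw [← Finset.sum_smul, ← Finset.mul_sum, hm1, mul_one]
    rw [Finset.sum_congr rfl h, ← hwp, Finset.centerMass_eq_of_sum_1 _ _ hw1]
    simp
  have hq' : ∑ t ∈ P, c t • t.2 = p := by
    rw [hP, Finset.sum_product]
    have h : ∀ u ∈ A, ∑ v ∈ B, c (u, v) • v = w u • (B.centerMass m id) := by
      intro u _
      rw [Finset.centerMass_eq_of_sum_1 _ _ hm1, Finset.smul_sum]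
      apply Finset.sum_congr rfl
      intro v _
      rw [hc]
      simp [mul_smul]
    rw [Finset.sum_congr rfl h, ← Finset.sum_smul, hw1, one_smul, hmp]
  have hzero : ∑ t ∈ P, c t • (t.1 - t.2) = 0 := by
    simp only [smul_sub]
    rw [Finset.sum_sub_distrib, hp', hq', sub_self]
  have hcsum : ∑ t ∈ P, c t = 1 := by
    rw [hP, Finset.sum_product]
    have h : ∀ u ∈ A, ∑ v ∈ B, c (u, v) = w u := by
      intro u _
      simp only [hc]
      rw [← Finset.mul_sum, hm1, mul_one]
    rw [Finset.sum_congr rfl h, hw1]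
  -- each pairwise inner product is at least ε
  have hterm : ∀ t ∈ P, ∀ t' ∈ P, ε ≤ ⟪t.1 - t.2, t'.1 - t'.2⟫ := by
    intro t ht t' ht'
    obtain ⟨htu, htv⟩ := Finset.mem_product.mp ht
    obtain ⟨htu', htv'⟩ := Finset.mem_product.mp ht'
    obtain ⟨x, hx, hxu⟩ := Finset.mem_image.mp htu
    obtain ⟨x', hx', hxu'⟩ := Finset.mem_image.mp htu'
    obtain ⟨z, hz, hzv⟩ := Finset.mem_image.mp htv
    obtain ⟨z', hz', hzv'⟩ := Finset.mem_image.mp htv'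
    rw [inner_expand]
    have h1 : B1 ≤ ‖t.1 - t'.2‖ := by
      rw [← hxu, ← hzv', hiso]
      exact hcross1 x hx z' (fun h => hdisj z' h hz')
    have h2 : B2 ≤ ‖t'.1 - t.2‖ := by
      rw [norm_sub_rev, ← hxu', ← hzv, hiso]
      exact hcross2 z hz x' (hdisj x' hx')
    have h3 : ‖t.1 - t'.1‖ ≤ M1 := by
      rw [← hxu, ← hxu', hiso]
      exact hM1le x hx x' hx'
    have h4 : ‖t.2 - t'.2‖ ≤ M2 := by
      rw [← hzv, ← hzv', hiso]
      exact hM2le z hz z' hz'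
    have n1 : 0 ≤ ‖t.1 - t'.2‖ := norm_nonneg _
    have n3 : 0 ≤ ‖t.1 - t'.1‖ := norm_nonneg _
    have n4 : 0 ≤ ‖t.2 - t'.2‖ := norm_nonneg _
    have s1 : B1^2 ≤ ‖t.1 - t'.2‖^2 := pow_le_pow_left₀ (le_of_lt hB1pos) h1 2
    have s2 : B2^2 ≤ ‖t'.1 - t.2‖^2 := pow_le_pow_left₀ (le_of_lt hB2pos) h2 2
    have s3 : ‖t.1 - t'.1‖^2 ≤ M1^2 := pow_le_pow_left₀ n3 h3 2
    have s4 : ‖t.2 - t'.2‖^2 ≤ M2^2 := pow_le_pow_left₀ n4 h4 2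
    rw [hε]; linarith
  -- the total inner product is 0 but at least ε
  have hfinal : ε ≤ (0 : ℝ) := by
    have hcalc : (0:ℝ) = ∑ t ∈ P, ∑ t' ∈ P, c t * (c t' * ⟪t.1 - t.2, t'.1 - t'.2⟫) := by
      have : (0:ℝ) = ⟪∑ t ∈ P, c t • (t.1 - t.2), ∑ t' ∈ P, c t' • (t'.1 - t'.2)⟫ := by
        rw [hzero, inner_zero_left]
      rw [this, sum_inner]
      apply Finset.sum_congr rfl
      intro t _
      rw [real_inner_smul_left, inner_sum, Finset.mul_sum]
      apply Finset.sum_congr rfl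
      intro t' _
      rw [real_inner_smul_right]
    have hge : ∑ t ∈ P, ∑ t' ∈ P, c t * (c t' * ε)
        ≤ ∑ t ∈ P, ∑ t' ∈ P, c t * (c t' * ⟪t.1 - t.2, t'.1 - t'.2⟫) := by
      apply Finset.sum_le_sum
      intro t ht
      apply Finset.sum_le_sum
      intro t' ht'
      exact mul_le_mul_of_nonneg_left
        (mul_le_mul_of_nonneg_left (hterm t ht t' ht') (hcnn t' ht')) (hcnn t ht)
    have heq : ∑ t ∈ P, ∑ t' ∈ P, c t * (c t' * ε) = ε := by
      have h1 : ∀ t ∈ P, ∑ t' ∈ P, c t * (c t' * ε) = c t * ε := by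
        intro t _
        rw [← Finset.mul_sum, ← Finset.sum_mul, hcsum, one_mul]
      rw [Finset.sum_congr rfl h1, ← Finset.sum_mul, hcsum, one_mul]
    rw [heq] at hge
    linarith [hge, hcalc.symm ▸ hge]
  linarith
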